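/- Zero-volume case: let Δ₀ : ℝ → ℝ be Lebesgue integrable with ∫_ℝ Δ₀(Y) dY = 0 and ∫_ℝ |Y·Δ₀(Y)| dY < ∞, set M₁ = ∫_ℝ Y·Δ₀(Y) dY, and define Δ(X,T) = ∫_ℝ G(X−Y,T) Δ₀(Y) dY for T > 0. Then the rescaled solution converges uniformly to the first derivative of the attractor: lim_{T→∞} sup_{U∈ℝ} |T^{1/2} · Δ(U·T^{1/4}, T) + M₁ · φ′(U)| = 0, where φ′(U) = −(1/(2π)) ∫_ℝ Q·exp(−Q⁴) sin(QU) dQ. -/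

import Mathlib

open MeasureTheory Real Filter

/-- The Green's function of the linearized capillary-driven thin film equation. -/
noncomputable def greenFn (X T : ℝ) : ℝ :=
  (1 / (2 * Real.pi)) * ∫ K : ℝ, Real.exp (-K ^ 4 * T) * Real.cos (K * X)

/-- The derivative of the universal self-similar attractor. -/
noncomputable def phiDeriv (U : ℝ) : ℝ :=
  -((1 / (2 * Real.pi)) * ∫ Q : ℝ, Q * Real.exp (-Q ^ 4) * Real.sin (Q * U))

/-!
The Green's function is self-similar, `G(X, T) = T^{-1/4} φ(X T^{-1/4})`, so with `ε = T^{-1/4}`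
the rescaled solution is `ε⁻¹ ∫ φ(U - εY) Δ₀(Y) dY`. As `Δ₀` has zero mass, `φ(U)` may be
subtracted inside, and adding `M₁ φ'(U) = ∫ Y φ'(U) Δ₀(Y) dY` leaves `ε⁻¹` times the integral of
the first-order Taylor remainder of `φ` against `Δ₀`. Read off the Fourier integral of `φ`, this
remainder is at most `min (A ε² Y²) (B ε |Y|)` uniformly in `U`, and dominated convergence against
`|Y Δ₀(Y)|` sends the resulting bound to zero.
-/

open Topology

lemma exp_neg_pow_four_le (Q : ℝ) : exp (-Q ^ 4) ≤ exp 1 * exp (-1 * Q ^ 2) := by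
  rw [← exp_add]
  exact exp_le_exp.mpr (by nlinarith [sq_nonneg (Q ^ 2 - 1)])

lemma integrable_pow_mul_exp_neg_pow_four (n : ℕ) :
    Integrable fun Q : ℝ => Q ^ n * exp (-Q ^ 4) := by
  have h : Integrable fun Q : ℝ => Q ^ n * exp (-1 * Q ^ 2) := by
    simpa [rpow_natCast] using
      integrable_rpow_mul_exp_neg_mul_sq one_pos (s := n) (by linarith [n.cast_nonneg (α := ℝ)])
  refine (h.norm.const_mul (exp 1)).mono' (by fun_prop) (Eventually.of_forall fun Q => ?_)
  simp only [norm_mul, norm_of_nonneg (exp_pos _).le]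
  rw [mul_left_comm]
  exact mul_le_mul_of_nonneg_left (exp_neg_pow_four_le Q) (norm_nonneg _)

lemma integrable_exp_neg_pow_four_mul_cos (U : ℝ) :
    Integrable fun Q : ℝ => exp (-Q ^ 4) * cos (Q * U) := by
  simpa using (integrable_pow_mul_exp_neg_pow_four 0).mul_bdd (c := 1) (by fun_prop)
    (Eventually.of_forall fun Q => abs_cos_le_one (Q * U))

lemma integrable_mul_exp_neg_pow_four_mul_sin (U : ℝ) :
    Integrable fun Q : ℝ => Q * exp (-Q ^ 4) * sin (Q * U) := by
  simpa using (integrable_pow_mul_exp_neg_pow_four 1).mul_bdd (c := 1) (by fun_prop)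
    (Eventually.of_forall fun Q => abs_sin_le_one (Q * U))

noncomputable def phi (U : ℝ) : ℝ :=
  (1 / (2 * π)) * ∫ Q : ℝ, exp (-Q ^ 4) * cos (Q * U)

lemma continuous_phi : Continuous phi := by
  refine continuous_const.mul (continuous_of_dominated (fun U => ?_) (fun U => ?_)
    (integrable_pow_mul_exp_neg_pow_four 0) (Eventually.of_forall fun Q => by fun_prop))
  · exact (integrable_exp_neg_pow_four_mul_cos U).aestronglyMeasurable
  · refine Eventually.of_forall fun Q => ?_
    rw [norm_mul, norm_of_nonneg (exp_pos _).le, pow_zero, one_mul]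
    exact mul_le_of_le_one_right (exp_pos _).le (abs_cos_le_one _)

lemma greenFn_eq_rpow_mul_phi (X : ℝ) {T : ℝ} (hT : 0 < T) :
    greenFn X T = T ^ (-(1 / 4) : ℝ) * phi (X * T ^ (-(1 / 4) : ℝ)) := by
  set a : ℝ := T ^ (1 / 4 : ℝ)
  have ha : 0 < a := rpow_pos_of_pos hT _
  have ha4 : a ^ 4 = T := by
    rw [← rpow_natCast, ← rpow_mul hT.le]; norm_num
  have hinv : T ^ (-(1 / 4) : ℝ) = a⁻¹ := rpow_neg hT.le _
  have hsub : ∀ K : ℝ, exp (-K ^ 4 * T) * cos (K * X)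
      = exp (-(a * K) ^ 4) * cos (a * K * (X * a⁻¹)) := fun K => by
    rw [mul_pow, ha4, show a * K * (X * a⁻¹) = K * X by field_simp]; ring_nf
  rw [greenFn, phi, hinv]
  simp_rw [hsub]
  rw [Measure.integral_comp_mul_left (fun Q => exp (-Q ^ 4) * cos (Q * (X * a⁻¹))) a,
    smul_eq_mul, abs_of_pos (inv_pos.mpr ha)]
  ring

lemma abs_cos_sub_sub_mul_sin_le_sq (a x : ℝ) : |cos (a - x) - cos a - x * sin a| ≤ x ^ 2 := by
  have h := Convex.norm_image_sub_le_of_norm_hasDerivWithin_le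
    (f := fun t => cos (a - t) - t * sin a) (f' := fun t => sin (a - t) - sin a)
    (s := Set.uIcc 0 x) (C := |x|)
    (fun t _ => by
      have := ((hasDerivAt_cos (a - t)).comp t ((hasDerivAt_id t).const_sub a)).sub
        ((hasDerivAt_id t).mul_const (sin a))
      exact (this.congr_deriv (by simp)).hasDerivWithinAt)
    (fun t ht => by
      rw [norm_eq_abs]
      calc |sin (a - t) - sin a| ≤ |a - t - a| := abs_sin_sub_sin_le _ _
        _ ≤ |x| := by simpa using Set.abs_sub_left_of_mem_uIcc ht)
    (convex_uIcc 0 x) Set.left_mem_uIcc Set.right_mem_uIcc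
  simpa [norm_eq_abs, ← sq, sub_sub, add_comm] using h

lemma abs_cos_sub_sub_mul_sin_le_abs (a x : ℝ) : |cos (a - x) - cos a - x * sin a| ≤ 2 * |x| :=
  calc |cos (a - x) - cos a - x * sin a| ≤ |cos (a - x) - cos a| + |x * sin a| := abs_sub _ _
    _ ≤ |a - x - a| + |x| := by
      rw [abs_mul]
      exact add_le_add (abs_cos_sub_cos_le _ _)
        (mul_le_of_le_one_right (abs_nonneg x) (abs_sin_le_one a))
    _ = 2 * |x| := by rw [sub_sub_cancel_left, abs_neg]; ring

lemma phi_sub_sub_add_mul_phiDeriv_eq_integral (U h : ℝ) :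
    phi (U - h) - phi U + h * phiDeriv U = (1 / (2 * π)) *
      ∫ Q : ℝ, exp (-Q ^ 4) * (cos (Q * U - Q * h) - cos (Q * U) - Q * h * sin (Q * U)) := by
  have hexpand : (fun Q : ℝ =>
      exp (-Q ^ 4) * (cos (Q * U - Q * h) - cos (Q * U) - Q * h * sin (Q * U))) =
      fun Q => exp (-Q ^ 4) * cos (Q * (U - h)) - exp (-Q ^ 4) * cos (Q * U)
        - h * (Q * exp (-Q ^ 4) * sin (Q * U)) := by
    funext Q; rw [mul_sub Q U h]; ring
  have hcos : Integrable fun Q : ℝ =>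
      exp (-Q ^ 4) * cos (Q * (U - h)) - exp (-Q ^ 4) * cos (Q * U) :=
    (integrable_exp_neg_pow_four_mul_cos _).sub (integrable_exp_neg_pow_four_mul_cos _)
  rw [hexpand, integral_sub hcos ((integrable_mul_exp_neg_pow_four_mul_sin U).const_mul h),
    integral_sub (integrable_exp_neg_pow_four_mul_cos _) (integrable_exp_neg_pow_four_mul_cos _),
    integral_const_mul, phi, phi, phiDeriv]
  ring

lemma abs_phi_sub_sub_add_mul_phiDeriv_le_sq (U h : ℝ) :
    |phi (U - h) - phi U + h * phiDeriv U| ≤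
      ((1 / (2 * π)) * ∫ Q : ℝ, Q ^ 2 * exp (-Q ^ 4)) * h ^ 2 := by
  rw [phi_sub_sub_add_mul_phiDeriv_eq_integral, abs_mul,
    abs_of_pos (by positivity : (0 : ℝ) < 1 / (2 * π)), mul_assoc, ← integral_mul_const,
    ← norm_eq_abs]
  gcongr
  refine norm_integral_le_of_norm_le ((integrable_pow_mul_exp_neg_pow_four 2).mul_const _)
    (Eventually.of_forall fun Q => ?_)
  calc ‖exp (-Q ^ 4) * (cos (Q * U - Q * h) - cos (Q * U) - Q * h * sin (Q * U))‖
      = exp (-Q ^ 4) * |cos (Q * U - Q * h) - cos (Q * U) - Q * h * sin (Q * U)| := by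
        rw [norm_mul, norm_of_nonneg (exp_pos _).le, norm_eq_abs]
    _ ≤ exp (-Q ^ 4) * (Q * h) ^ 2 := by gcongr; exact abs_cos_sub_sub_mul_sin_le_sq _ _
    _ = Q ^ 2 * exp (-Q ^ 4) * h ^ 2 := by ring

lemma abs_phi_sub_sub_add_mul_phiDeriv_le_abs (U h : ℝ) :
    |phi (U - h) - phi U + h * phiDeriv U| ≤
      ((1 / (2 * π)) * ∫ Q : ℝ, 2 * |Q| * exp (-Q ^ 4)) * |h| := by
  have hint : Integrable fun Q : ℝ => 2 * |Q| * exp (-Q ^ 4) := by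
    simpa [mul_assoc, abs_of_pos (exp_pos _)] using
      (integrable_pow_mul_exp_neg_pow_four 1).norm.const_mul 2
  rw [phi_sub_sub_add_mul_phiDeriv_eq_integral, abs_mul,
    abs_of_pos (by positivity : (0 : ℝ) < 1 / (2 * π)), mul_assoc, ← integral_mul_const,
    ← norm_eq_abs]
  gcongr
  refine norm_integral_le_of_norm_le (hint.mul_const _) (Eventually.of_forall fun Q => ?_)
  calc ‖exp (-Q ^ 4) * (cos (Q * U - Q * h) - cos (Q * U) - Q * h * sin (Q * U))‖
      = exp (-Q ^ 4) * |cos (Q * U - Q * h) - cos (Q * U) - Q * h * sin (Q * U)| := by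
        rw [norm_mul, norm_of_nonneg (exp_pos _).le, norm_eq_abs]
    _ ≤ exp (-Q ^ 4) * (2 * |Q * h|) := by gcongr; exact abs_cos_sub_sub_mul_sin_le_abs _ _
    _ = 2 * |Q| * exp (-Q ^ 4) * |h| := by rw [abs_mul]; ring

section RescaledConvolution

variable {f f' Δ₀ : ℝ → ℝ} {A B : ℝ}

lemma inv_mul_abs_taylor_le_min (hA : ∀ U h, |f (U - h) - f U + h * f' U| ≤ A * h ^ 2)
    (hB : ∀ U h, |f (U - h) - f U + h * f' U| ≤ B * |h|) {ε : ℝ} (hε : 0 < ε) (U Y : ℝ) :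
    ε⁻¹ * |f (U - ε * Y) - f U + ε * Y * f' U| ≤ min (A * ε * Y ^ 2) (B * |Y|) :=
  le_min ((inv_mul_le_iff₀ hε).mpr ((hA U (ε * Y)).trans_eq (by ring)))
    ((inv_mul_le_iff₀ hε).mpr ((hB U (ε * Y)).trans_eq (by rw [abs_mul, abs_of_pos hε]; ring)))

lemma inv_mul_integral_comp_sub_mul_add_eq (hf : Continuous f)
    (hB : ∀ U h, |f (U - h) - f U + h * f' U| ≤ B * |h|) (hΔ₀ : Integrable Δ₀)
    (hvol : ∫ Y, Δ₀ Y = 0) (hmom : Integrable fun Y => Y * Δ₀ Y) {ε : ℝ} (hε : 0 < ε) (U : ℝ) :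
    (ε⁻¹ * ∫ Y, f (U - ε * Y) * Δ₀ Y) + (∫ Y, Y * Δ₀ Y) * f' U =
      ε⁻¹ * ∫ Y, (f (U - ε * Y) - f U + ε * Y * f' U) * Δ₀ Y := by
  have hcont : Continuous fun Y => f (U - ε * Y) - f U + ε * Y * f' U := by fun_prop
  have hR : Integrable fun Y => (f (U - ε * Y) - f U + ε * Y * f' U) * Δ₀ Y := by
    refine (hmom.norm.const_mul (B * ε)).mono' (hcont.aestronglyMeasurable.mul hΔ₀.1)
      (Eventually.of_forall fun Y => ?_)
    calc ‖(f (U - ε * Y) - f U + ε * Y * f' U) * Δ₀ Y‖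
        = |f (U - ε * Y) - f U + ε * Y * f' U| * ‖Δ₀ Y‖ := by rw [norm_mul, norm_eq_abs]
      _ ≤ B * |ε * Y| * ‖Δ₀ Y‖ := by gcongr; exact hB U (ε * Y)
      _ = B * ε * ‖Y * Δ₀ Y‖ := by
        rw [abs_mul, abs_of_pos hε, norm_mul, norm_eq_abs, norm_eq_abs]; ring
  have hsplit : (fun Y => f (U - ε * Y) * Δ₀ Y) = fun Y =>
      (f (U - ε * Y) - f U + ε * Y * f' U) * Δ₀ Y + f U * Δ₀ Y - ε * f' U * (Y * Δ₀ Y) := by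
    funext Y; ring
  have hsum : Integrable fun Y =>
      (f (U - ε * Y) - f U + ε * Y * f' U) * Δ₀ Y + f U * Δ₀ Y := hR.add (hΔ₀.const_mul _)
  rw [hsplit, integral_sub hsum (hmom.const_mul _),
    integral_add hR (hΔ₀.const_mul _), integral_const_mul, integral_const_mul, hvol]
  generalize ∫ Y, (f (U - ε * Y) - f U + ε * Y * f' U) * Δ₀ Y = I
  field_simp
  ring

lemma norm_min_mul_abs_le (hA : 0 ≤ A) (hB : 0 ≤ B) {ε : ℝ} (hε : 0 ≤ ε) (Y x : ℝ) :
    ‖min (A * ε * Y ^ 2) (B * |Y|) * |x|‖ ≤ B * ‖Y * x‖ := by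
  rw [norm_eq_abs, norm_eq_abs, abs_mul, abs_mul, abs_abs,
    abs_of_nonneg (le_min (by positivity) (by positivity)), ← mul_assoc]
  exact mul_le_mul_of_nonneg_right (min_le_right _ _) (abs_nonneg _)

lemma integrable_min_mul_abs (hA : 0 ≤ A) (hB : 0 ≤ B) {ε : ℝ} (hε : 0 ≤ ε)
    (hΔ₀ : AEStronglyMeasurable Δ₀) (hmom : Integrable fun Y => Y * Δ₀ Y) :
    Integrable fun Y => min (A * ε * Y ^ 2) (B * |Y|) * |Δ₀ Y| :=
  (hmom.norm.const_mul B).mono' ((by fun_prop : Continuous fun Y : ℝ =>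
    min (A * ε * Y ^ 2) (B * |Y|)).aestronglyMeasurable.mul hΔ₀.norm)
    (Eventually.of_forall fun Y => norm_min_mul_abs_le hA hB hε Y (Δ₀ Y))

lemma tendsto_integral_min_mul_abs (hA : 0 ≤ A) (hB : 0 ≤ B) (hΔ₀ : AEStronglyMeasurable Δ₀)
    (hmom : Integrable fun Y => Y * Δ₀ Y) :
    Tendsto (fun ε => ∫ Y, min (A * ε * Y ^ 2) (B * |Y|) * |Δ₀ Y|) (𝓝[>] 0) (𝓝 0) := by
  have h := tendsto_integral_filter_of_dominated_convergence (l := 𝓝[>] (0 : ℝ))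
    (F := fun ε Y => min (A * ε * Y ^ 2) (B * |Y|) * |Δ₀ Y|) (f := fun _ => 0)
    (fun Y => B * ‖Y * Δ₀ Y‖)
    (eventually_mem_nhdsWithin.mono fun ε hε =>
      (integrable_min_mul_abs hA hB hε.le hΔ₀ hmom).aestronglyMeasurable)
    (eventually_mem_nhdsWithin.mono fun ε hε =>
      Eventually.of_forall fun Y => norm_min_mul_abs_le hA hB hε.le Y (Δ₀ Y))
    (hmom.norm.const_mul B) (Eventually.of_forall fun Y => ?_)
  · simpa using h
  · have hcont : Continuous fun ε : ℝ => min (A * ε * Y ^ 2) (B * |Y|) * |Δ₀ Y| := by fun_prop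
    have h0 : min (A * 0 * Y ^ 2) (B * |Y|) * |Δ₀ Y| = 0 := by
      rw [mul_zero, zero_mul, min_eq_left (by positivity), zero_mul]
    exact (h0 ▸ hcont.tendsto 0).mono_left nhdsWithin_le_nhds

lemma abs_inv_mul_integral_comp_sub_mul_add_le (hf : Continuous f)
    (hA : ∀ U h, |f (U - h) - f U + h * f' U| ≤ A * h ^ 2)
    (hB : ∀ U h, |f (U - h) - f U + h * f' U| ≤ B * |h|) (hA₀ : 0 ≤ A) (hB₀ : 0 ≤ B)
    (hΔ₀ : Integrable Δ₀) (hvol : ∫ Y, Δ₀ Y = 0) (hmom : Integrable fun Y => Y * Δ₀ Y)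
    {ε : ℝ} (hε : 0 < ε) (U : ℝ) :
    |(ε⁻¹ * ∫ Y, f (U - ε * Y) * Δ₀ Y) + (∫ Y, Y * Δ₀ Y) * f' U| ≤
      ∫ Y, min (A * ε * Y ^ 2) (B * |Y|) * |Δ₀ Y| := by
  rw [inv_mul_integral_comp_sub_mul_add_eq hf hB hΔ₀ hvol hmom hε U, ← integral_const_mul,
    ← norm_eq_abs]
  refine norm_integral_le_of_norm_le (integrable_min_mul_abs hA₀ hB₀ hε.le hΔ₀.1 hmom)
    (Eventually.of_forall fun Y => ?_)
  rw [← mul_assoc, norm_mul, norm_mul, norm_of_nonneg (inv_nonneg.mpr hε.le), norm_eq_abs,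
    norm_eq_abs]
  exact mul_le_mul_of_nonneg_right (inv_mul_abs_taylor_le_min hA hB hε U Y) (abs_nonneg _)

theorem tendstoUniformly_inv_mul_integral_comp_sub_mul (hf : Continuous f)
    (hA : ∀ U h, |f (U - h) - f U + h * f' U| ≤ A * h ^ 2)
    (hB : ∀ U h, |f (U - h) - f U + h * f' U| ≤ B * |h|)
    (hΔ₀ : Integrable Δ₀) (hvol : ∫ Y, Δ₀ Y = 0) (hmom : Integrable fun Y => Y * Δ₀ Y) :
    TendstoUniformly (fun ε U => ε⁻¹ * ∫ Y, f (U - ε * Y) * Δ₀ Y)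
      (fun U => -((∫ Y, Y * Δ₀ Y) * f' U)) (𝓝[>] 0) := by
  have hA₀ : 0 ≤ A := by simpa using (abs_nonneg _).trans (hA 0 1)
  have hB₀ : 0 ≤ B := by simpa using (abs_nonneg _).trans (hB 0 1)
  rw [Metric.tendstoUniformly_iff]
  intro η hη
  filter_upwards [(tendsto_integral_min_mul_abs hA₀ hB₀ hΔ₀.1 hmom).eventually_lt_const hη,
    self_mem_nhdsWithin] with ε hlt hε U
  rw [dist_comm, dist_eq, sub_neg_eq_add]
  exact (abs_inv_mul_integral_comp_sub_mul_add_le hf hA hB hA₀ hB₀ hΔ₀ hvol hmom hε U).trans_lt hlt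

end RescaledConvolution

lemma rpow_mul_integral_greenFn_eq (Δ₀ : ℝ → ℝ) {T : ℝ} (hT : 0 < T) (U : ℝ) :
    T ^ (1 / 2 : ℝ) * ∫ Y, greenFn (U * T ^ (1 / 4 : ℝ) - Y) T * Δ₀ Y =
      (T ^ (-(1 / 4) : ℝ))⁻¹ * ∫ Y, phi (U - T ^ (-(1 / 4) : ℝ) * Y) * Δ₀ Y := by
  have hε : T ^ (-(1 / 4) : ℝ) ≠ 0 := (rpow_pos_of_pos hT _).ne'
  have hquarter : T ^ (1 / 4 : ℝ) = (T ^ (-(1 / 4) : ℝ))⁻¹ := by rw [rpow_neg hT.le, inv_inv]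
  have hhalf : T ^ (1 / 2 : ℝ) * T ^ (-(1 / 4) : ℝ) = (T ^ (-(1 / 4) : ℝ))⁻¹ := by
    rw [← rpow_add hT, ← hquarter]; norm_num
  simp_rw [greenFn_eq_rpow_mul_phi _ hT, mul_assoc, integral_const_mul, ← mul_assoc, hhalf,
    hquarter]
  congr 2 with Y
  field_simp

/-- Zero-volume case: if `Δ₀` is integrable with zero algebraic volume and finite first
absolute moment, with first moment `M₁`, then the rescaled solution
`U ↦ T^{1/2} Δ(U T^{1/4}, T)` converges uniformly, as `T → ∞`, to `−M₁ · φ′`, i.e.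
`lim_{T→∞} sup_U |T^{1/2} Δ(U T^{1/4}, T) + M₁ φ′(U)| = 0`. -/
theorem zero_volume_uniform_convergence (Δ₀ : ℝ → ℝ) (hΔ₀ : Integrable Δ₀)
    (hvol : ∫ Y : ℝ, Δ₀ Y = 0) (hmom : Integrable (fun Y : ℝ => Y * Δ₀ Y))
    (M₁ : ℝ) (hM₁ : M₁ = ∫ Y : ℝ, Y * Δ₀ Y)
    (Δ : ℝ → ℝ → ℝ) (hΔ : ∀ X T : ℝ, Δ X T = ∫ Y : ℝ, greenFn (X - Y) T * Δ₀ Y) :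
    TendstoUniformly
      (fun (T : ℝ) (U : ℝ) => T ^ ((1 / 2 : ℝ)) * Δ (U * T ^ ((1 / 4 : ℝ))) T)
      (fun U => -(M₁ * phiDeriv U)) atTop := by
  subst hM₁
  have hε : Tendsto (fun T : ℝ => T ^ (-(1 / 4) : ℝ)) atTop (𝓝[>] 0) :=
    tendsto_nhdsWithin_iff.mpr ⟨tendsto_rpow_neg_atTop (by norm_num),
      (eventually_gt_atTop 0).mono fun T hT => rpow_pos_of_pos hT _⟩
  have hlim := tendstoUniformly_inv_mul_integral_comp_sub_mul continuous_phi
    abs_phi_sub_sub_add_mul_phiDeriv_le_sq abs_phi_sub_sub_add_mul_phiDeriv_le_abs hΔ₀ hvol hmom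
  refine (tendstoUniformly_congr ?_).mpr fun u hu => hε.eventually (hlim u hu)
  filter_upwards [eventually_gt_atTop 0] with T hT
  funext U
  rw [hΔ, rpow_mul_integral_greenFn_eq Δ₀ hT U]
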